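/- arXiv:math/0411357 — 7 statements merged into one kernel-verified Lean document; each statement's English description precedes it below -/
import Mathlib

section
/- For every positive integer k, t_k := (q^{k/2} − q^{−k/2})^2 is a polynomial with integer coefficients in t := (q^{1/2} − q^{−1/2})^2; explicitly, t_k = Σ_{j=1}^{k} (k/j)·C(j+k−1, 2j−1)·t^j. -/
/-!
Write `x` for `q^{1/2}` and `t = (x - x⁻¹)²`. Then `w_k = x^{2k} + x^{-2k} = t_k + 2`, and since
`x² + x⁻² = t + 2`, these satisfy `w_{k+2} = (t + 2) w_{k+1} - w_k`, the recurrence of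
`2 T_k(1 + t/2)`. Its coefficients `c(k, j) = C(k+j, 2j) + C(k+j-1, 2j)` obey this recurrence by
Pascal's rule, and `j c(k, j) = k C(j+k-1, 2j-1)` identifies them with the coefficients of the
theorem and shows these are integers.
-/

open Polynomial Finset

theorem Nat.choose_add_two_add_choose (n m : ℕ) :
    (n + 2).choose (m + 2) + n.choose (m + 2) = 2 * (n + 1).choose (m + 2) + n.choose m := by
  rw [Nat.choose_succ_succ' (n + 1), Nat.choose_succ_succ' n m, Nat.choose_succ_succ' n (m + 1)]
  ring

def shiftedTCoeff (k j : ℕ) : ℕ := (k + j).choose (2 * j) + (k + j - 1).choose (2 * j)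

/-- `2 T_k(1 + X/2)`, for the Chebyshev polynomial `T_k`. -/
noncomputable def shiftedT (k : ℕ) : ℕ[X] :=
  ∑ j ∈ range (k + 1), monomial j (shiftedTCoeff k j)

@[simp] lemma shiftedTCoeff_zero_right (k : ℕ) : shiftedTCoeff k 0 = 2 := by
  simp [shiftedTCoeff]

lemma shiftedTCoeff_succ_right (k j : ℕ) :
    shiftedTCoeff k (j + 1) = (k + j + 1).choose (2 * j + 2) + (k + j).choose (2 * j + 2) := by
  rfl

lemma shiftedTCoeff_eq_zero_of_lt {k j : ℕ} (h : k < j) : shiftedTCoeff k j = 0 := by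
  simp only [shiftedTCoeff, Nat.add_eq_zero_iff]
  constructor <;> exact Nat.choose_eq_zero_of_lt (by omega)

lemma shiftedTCoeff_add_two_succ (k j : ℕ) :
    shiftedTCoeff (k + 2) (j + 1) + shiftedTCoeff k (j + 1) =
      shiftedTCoeff (k + 1) j + 2 * shiftedTCoeff (k + 1) (j + 1) := by
  have h₁ := Nat.choose_add_two_add_choose (k + j + 1) (2 * j)
  have h₂ := Nat.choose_add_two_add_choose (k + j) (2 * j)
  rw [shiftedTCoeff_succ_right, shiftedTCoeff_succ_right, shiftedTCoeff_succ_right]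
  simp only [shiftedTCoeff, show k + 1 + j = k + j + 1 by omega, Nat.add_sub_cancel]
  ring_nf at h₁ h₂ ⊢
  omega

lemma mul_shiftedTCoeff {k j : ℕ} (hj : 0 < j) :
    j * shiftedTCoeff k j = k * (j + k - 1).choose (2 * j - 1) := by
  obtain ⟨i, rfl⟩ : ∃ i, j = i + 1 := ⟨j - 1, by omega⟩
  rw [show i + 1 + k - 1 = k + i by omega, show 2 * (i + 1) - 1 = 2 * i + 1 by omega,
    shiftedTCoeff_succ_right, Nat.choose_succ_succ' (k + i)]
  calc (i + 1) * ((k + i).choose (2 * i + 1) + (k + i).choose (2 * i + 2)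
          + (k + i).choose (2 * i + 2))
      = (i + 1) * (k + i).choose (2 * i + 1)
          + (k + i).choose (2 * i + 1 + 1) * (2 * i + 1 + 1) := by
        ring
    _ = (k + i).choose (2 * i + 1) * (i + 1 + (k + i - (2 * i + 1))) := by
        rw [Nat.choose_succ_right_eq]; ring
    _ = k * (k + i).choose (2 * i + 1) := by
        rcases lt_or_ge (k + i) (2 * i + 1) with hlt | hle
        · simp [Nat.choose_eq_zero_of_lt hlt]
        · rw [mul_comm, show i + 1 + (k + i - (2 * i + 1)) = k by omega]

lemma coeff_shiftedT (k j : ℕ) : (shiftedT k).coeff j = shiftedTCoeff k j := by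
  simp only [shiftedT, finsetSum_coeff, coeff_monomial, sum_ite_eq', mem_range]
  split_ifs with h
  · rfl
  · exact (shiftedTCoeff_eq_zero_of_lt (by omega)).symm

lemma shiftedT_add_two (k : ℕ) : shiftedT (k + 2) + shiftedT k = (X + 2) * shiftedT (k + 1) := by
  ext (_ | j)
  · simp [coeff_shiftedT, add_mul]
  · simp [coeff_shiftedT, add_mul, coeff_X_mul, shiftedTCoeff_add_two_succ]

lemma shiftedT_zero : shiftedT 0 = 2 := by
  simp [shiftedT]

lemma shiftedT_one : shiftedT 1 = X + 2 := by
  rw [shiftedT, sum_range_succ, sum_range_one, add_comm]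
  simp [shiftedTCoeff, monomial_one_one_eq_X]

lemma aeval_shiftedT {R : Type*} [CommRing R] {x y : R} (h : x * y = 1) (k : ℕ) :
    aeval ((x - y) ^ 2) (shiftedT k) = x ^ (2 * k) + y ^ (2 * k) := by
  induction k using Nat.twoStepInduction with
  | zero => rw [shiftedT_zero, map_ofNat]; ring
  | one =>
    simp only [shiftedT_one, map_add, aeval_X, map_ofNat]
    linear_combination (-2) * h
  | more k ih₀ ih₁ =>
    have hrec := congrArg (aeval ((x - y) ^ 2)) (shiftedT_add_two k)
    simp only [map_add, map_mul, aeval_X, ih₀, ih₁, map_ofNat] at hrec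
    -- `(x - y)² + 2 = x² + y² - 2 (xy - 1)` and `(x² + y²) w_{k+1} = w_{k+2} + x²y² w_k`
    linear_combination hrec - (2 * (x ^ (2 * k + 2) + y ^ (2 * k + 2))
      - (x * y + 1) * (x ^ (2 * k) + y ^ (2 * k))) * h

lemma sq_pow_sub_pow_eq_sum {R : Type*} [CommRing R] {x y : R} (h : x * y = 1) (k : ℕ) :
    (x ^ k - y ^ k) ^ 2 = ∑ j ∈ Icc 1 k, (shiftedTCoeff k j : R) * ((x - y) ^ 2) ^ j := by
  have hk := aeval_shiftedT h k
  rw [shiftedT, map_sum, range_eq_Ico, sum_eq_sum_Ico_succ_bot k.succ_pos, zero_add,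
    Nat.succ_eq_add_one, Ico_add_one_right_eq_Icc] at hk
  simp only [aeval_monomial, shiftedTCoeff_zero_right, map_ofNat, eq_natCast, pow_zero,
    mul_one] at hk
  have hpow : x ^ k * y ^ k = 1 := by rw [← mul_pow, h, one_pow]
  linear_combination -hk - 2 * hpow

theorem tk_polynomial_in_t_general (K : Type*) [Field K] [CharZero K] (x : K) (hx : x ≠ 0)
    (k : ℕ) :
    (∀ j ∈ Finset.Icc 1 k, (j : ℤ) ∣ (k * Nat.choose (j + k - 1) (2 * j - 1) : ℤ)) ∧
    (x ^ k - x⁻¹ ^ k) ^ 2 =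
      ∑ j ∈ Finset.Icc 1 k,
        ((k * Nat.choose (j + k - 1) (2 * j - 1) : K) / (j : K)) * ((x - x⁻¹) ^ 2) ^ j := by
  have hcoeff (j : ℕ) (hj : j ∈ Icc 1 k) :
      j * shiftedTCoeff k j = k * (j + k - 1).choose (2 * j - 1) :=
    mul_shiftedTCoeff (mem_Icc.1 hj).1
  refine ⟨fun j hj ↦ Dvd.intro (shiftedTCoeff k j : ℤ) (by exact_mod_cast hcoeff j hj), ?_⟩
  rw [sq_pow_sub_pow_eq_sum (mul_inv_cancel₀ hx)]
  refine sum_congr rfl fun j hj ↦ congrArg (· * _) ?_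
  have hj₀ : (j : K) ≠ 0 := Nat.cast_ne_zero.2 (by grind)
  rw [eq_div_iff hj₀]
  exact_mod_cast (mul_comm _ _).trans (hcoeff j hj)

/-- For every positive integer k, t_k = (q^{k/2} − q^{−k/2})^2 is given by the explicit
polynomial Σ_{j=1}^{k} (k/j)·C(j+k−1, 2j−1)·t^j in t = (q^{1/2} − q^{−1/2})^2, whose
coefficients (k/j)·C(j+k−1,2j−1) are integers.  Here x plays the role of q^{1/2}. -/
theorem tk_polynomial_in_t (K : Type*) [Field K] [CharZero K] (x : K) (hx : x ≠ 0)
    (k : ℕ) (hk : 0 < k) :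
    (∀ j ∈ Finset.Icc 1 k, (j : ℤ) ∣ (k * Nat.choose (j + k - 1) (2 * j - 1) : ℤ)) ∧
    (x ^ k - x⁻¹ ^ k) ^ 2 =
      ∑ j ∈ Finset.Icc 1 k,
        ((k * Nat.choose (j + k - 1) (2 * j - 1) : K) / (j : K)) * ((x - x⁻¹) ^ 2) ^ j :=
  tk_polynomial_in_t_general K x hx k
end

section
/- Let a_1,…,a_m, b_1,…,b_n be integers such that m+n is even and Σa_i + Σb_j is even. If the quotient Π_i[a_i] / Π_j[b_j] is a Laurent polynomial in q^{1/2} with integer coefficients, then it lies in ℤ[t] where t = q + q^{−1} − 2. -/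
/-!
Write `T` for `q^{1/2}`. The involutions `T ↦ T⁻¹` and `T ↦ -T` of `ℤ[T, T⁻¹]` multiply each
`[c]` by `-1` and by `(-1)^c` respectively. By the two parity hypotheses numerator and
denominator pick up the same sign, so the quotient `f` is fixed by both involutions: its
coefficients are symmetric and vanish in odd degrees. Such an `f` is an integer combination of
the `T^{2k} + T^{-2k} = C_k(T² + T⁻²)`, `C_k` the Chebyshev polynomials, hence a polynomial in
`T² + T⁻² = t + 2`.
-/

open LaurentPolynomial

theorem map_prod_of_map_eq_mul {M F ι : Type*} [CommMonoid M] [FunLike F M M] [MonoidHomClass F M M]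
    (φ : F) (s : Finset ι) (x ε : ι → M) (h : ∀ i ∈ s, φ (x i) = ε i * x i) :
    φ (∏ i ∈ s, x i) = (∏ i ∈ s, ε i) * ∏ i ∈ s, x i := by
  rw [map_prod, Finset.prod_congr rfl h, Finset.prod_mul_distrib]

theorem map_eq_self_of_mul_eq {S F : Type*} [CommRing S] [IsDomain S] [FunLike F S S]
    [MulHomClass F S S] (φ : F) {f A B ε : S} (hε : ε ≠ 0) (hB : B ≠ 0)
    (hφA : φ A = ε * A) (hφB : φ B = ε * B) (hf : f * B = A) : φ f = f := by
  refine mul_right_cancel₀ (mul_ne_zero hε hB) ?_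
  calc φ f * (ε * B) = φ (f * B) := by rw [map_mul, hφB]
    _ = f * (ε * B) := by rw [hf, hφA, ← hf]; ring

theorem Int.prod_negOnePow {ι : Type*} (s : Finset ι) (a : ι → ℤ) :
    ∏ i ∈ s, (a i).negOnePow = (∑ i ∈ s, a i).negOnePow := by
  classical
  induction s using Finset.induction_on with
  | empty => simp
  | insert i s hi ih => rw [Finset.prod_insert hi, Finset.sum_insert hi, ih, Int.negOnePow_add]

namespace LaurentPolynomial

variable {R : Type*} [CommRing R]

/-- The substitution `T ↦ -T`. -/
noncomputable def negT : R[T;T⁻¹] →ₐ[R] R[T;T⁻¹] :=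
  AddMonoidAlgebra.lift R R[T;T⁻¹] ℤ
    { toFun n := C ((n.toAdd.negOnePow : ℤ) : R) * T n.toAdd
      map_one' := by simp
      map_mul' x y := by
        simp only [toAdd_mul, Int.negOnePow_add, Units.val_mul, Int.cast_mul, map_mul, T_add]
        ring }

theorem negT_single (n : ℤ) (r : R) :
    negT (.single n r) = r • (C ((n.negOnePow : ℤ) : R) * T n) :=
  AddMonoidAlgebra.lift_single _ n r

theorem negT_T (n : ℤ) : negT (T n : R[T;T⁻¹]) = C ((n.negOnePow : ℤ) : R) * T n :=
  (negT_single n 1).trans (one_smul R _)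

theorem coeff_negT (f : R[T;T⁻¹]) (k : ℤ) :
    (negT f).coeff k = ((k.negOnePow : ℤ) : R) * f.coeff k := by
  induction f using AddMonoidAlgebra.induction_linear with
  | zero => simp
  | add f g hf hg =>
    simp only [map_add, AddMonoidAlgebra.coeff_add, Finsupp.add_apply, hf, hg, mul_add]
  | single n r =>
    rw [negT_single, ← single_eq_C_mul_T, AddMonoidAlgebra.coeff_smul,
      AddMonoidAlgebra.coeff_single, AddMonoidAlgebra.coeff_single, Finsupp.smul_apply,
      Finsupp.single_apply, Finsupp.single_apply]
    split_ifs with h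
    · subst h; simp [mul_comm]
    · simp

/-- The q-number `[c]`, with `T` standing for `q^{1/2}`. -/
noncomputable def qnum (c : ℤ) : R[T;T⁻¹] := T c - T (-c)

theorem invert_qnum (c : ℤ) : invert (qnum c : R[T;T⁻¹]) = -qnum c := by
  rw [qnum, map_sub, invert_T, invert_T, neg_neg, neg_sub]

theorem negT_qnum (c : ℤ) : negT (qnum c : R[T;T⁻¹]) = C ((c.negOnePow : ℤ) : R) * qnum c := by
  rw [qnum, map_sub, negT_T, negT_T, Int.negOnePow_neg, mul_sub]

theorem qnum_ne_zero [Nontrivial R] {c : ℤ} (hc : c ≠ 0) : (qnum c : R[T;T⁻¹]) ≠ 0 :=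
  sub_ne_zero.mpr fun h => hc <| by
    have := (AddMonoidAlgebra.single_left_inj one_ne_zero).mp h
    omega

theorem invert_prod_qnum {ι : Type*} (s : Finset ι) (a : ι → ℤ) :
    invert (∏ i ∈ s, qnum (a i) : R[T;T⁻¹]) = (-1) ^ s.card * ∏ i ∈ s, qnum (a i) := by
  rw [map_prod_of_map_eq_mul invert s _ (fun _ => -1) fun i _ => by rw [invert_qnum, neg_one_mul],
    Finset.prod_const]

theorem negT_prod_qnum {ι : Type*} (s : Finset ι) (a : ι → ℤ) :
    negT (∏ i ∈ s, qnum (a i) : R[T;T⁻¹]) =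
      C (((∑ i ∈ s, a i).negOnePow : ℤ) : R) * ∏ i ∈ s, qnum (a i) := by
  rw [map_prod_of_map_eq_mul negT s _ _ fun i _ => negT_qnum (a i), ← map_prod, ← Int.cast_prod,
    ← Units.coe_prod, Int.prod_negOnePow]

theorem eq_C_add_sum_of_coeff_neg (f : R[T;T⁻¹]) (hf : ∀ k, f.coeff (-k) = f.coeff k) :
    f = C (f.coeff 0) + ∑ k ∈ f.coeff.support with 0 < k, C (f.coeff k) * (T k + T (-k)) := by
  ext j
  simp only [mul_add, Finset.sum_add_distrib, ← single_eq_C_mul_T]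
  simp only [← single_eq_C, AddMonoidAlgebra.coeff_add, AddMonoidAlgebra.coeff_sum,
    AddMonoidAlgebra.coeff_single, Finsupp.coe_add, Pi.add_apply, Finsupp.finsetSum_apply,
    Finsupp.single_apply, neg_eq_iff_eq_neg, Finset.sum_ite_eq', hf]
  split_ifs <;> grind

theorem aeval_T_add_T_neg_chebyshevC (d n : ℤ) :
    Polynomial.aeval (T d + T (-d) : R[T;T⁻¹]) (Polynomial.Chebyshev.C R n) =
      T (n * d) + T (-(n * d)) := by
  induction n using Polynomial.Chebyshev.induct' with
  | zero =>
    rw [Polynomial.Chebyshev.C_zero, zero_mul, neg_zero, T_zero, map_ofNat, one_add_one_eq_two]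
  | one => simp [Polynomial.Chebyshev.C_one]
  | add_two n ih₁ ih₀ =>
    have hd : (T d * T (-d) : R[T;T⁻¹]) = 1 := by rw [← T_add, add_neg_cancel, T_zero]
    rw [Polynomial.Chebyshev.C_add_two, map_sub, map_mul, Polynomial.aeval_X, ih₁, ih₀]
    simp only [add_mul, two_mul, one_mul, neg_add, T_add]
    linear_combination (T (n * d) + T (-(n * d)) : R[T;T⁻¹]) * hd
  | neg n ih => rw [Polynomial.Chebyshev.C_neg, ih, neg_mul, neg_neg, add_comm]

theorem mem_adjoin_T_add_T_neg (d : ℤ) (f : R[T;T⁻¹]) (hsymm : ∀ k, f.coeff (-k) = f.coeff k)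
    (hdvd : ∀ k, f.coeff k ≠ 0 → d ∣ k) : f ∈ Algebra.adjoin R {T d + T (-d)} := by
  have hC (r : R) : C r ∈ Algebra.adjoin R {(T d + T (-d) : R[T;T⁻¹])} := by
    rw [C_eq_algebraMap]; exact Subalgebra.algebraMap_mem _ r
  rw [eq_C_add_sum_of_coeff_neg f hsymm]
  refine add_mem (hC _) (Subalgebra.sum_mem _ fun k hk => Subalgebra.mul_mem _ (hC _) ?_)
  obtain ⟨n, rfl⟩ := hdvd k (Finsupp.mem_support_iff.mp (Finset.mem_filter.mp hk).1)
  rw [mul_comm, ← aeval_T_add_T_neg_chebyshevC]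
  exact Polynomial.aeval_mem_adjoin_singleton R _

end LaurentPolynomial

/-- If m+n and Σa_i + Σb_j are even and the quotient Π_i[a_i] / Π_j[b_j] is a Laurent
polynomial f in q^{1/2} with integer coefficients (i.e. f·Π[b_j] = Π[a_i] with all
b_j ≠ 0), then f lies in ℤ[t], t = q + q^{−1} − 2.  Here T is q^{1/2}. -/
theorem quotient_qnum_mem_Z_t (m n : ℕ) (a : Fin m → ℤ) (b : Fin n → ℤ)
    (hb : ∀ j, b j ≠ 0) (hmn : Even (m + n))
    (hsum : Even (∑ i, a i + ∑ j, b j))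
    (f : LaurentPolynomial ℤ)
    (hf : f * ∏ j, (T (b j) - T (-(b j))) = ∏ i, (T (a i) - T (-(a i)))) :
    ∃ P : Polynomial ℤ,
      Polynomial.aeval (T 2 + T (-2) - 2 : LaurentPolynomial ℤ) P = f := by
  replace hf : f * ∏ j, qnum (b j) = ∏ i, qnum (a i) := hf
  have hB : ∏ j, qnum (b j) ≠ (0 : ℤ[T;T⁻¹]) :=
    Finset.prod_ne_zero_iff.mpr fun j _ => qnum_ne_zero (hb j)
  have hinv : invert f = f := by
    refine map_eq_self_of_mul_eq invert (by simp) hB ?_ (invert_prod_qnum _ _) hf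
    rw [invert_prod_qnum, Finset.card_univ, Finset.card_univ, Fintype.card_fin, Fintype.card_fin,
      neg_one_pow_congr (Nat.even_add.mp hmn)]
  have hneg : negT f = f := by
    refine map_eq_self_of_mul_eq negT (by simp) hB ?_ (negT_prod_qnum _ _) hf
    rw [negT_prod_qnum, (Int.negOnePow_eq_iff _ _).mpr]
    rw [Int.even_iff] at hsum ⊢
    omega
  have heven (k : ℤ) (hk : f.coeff k ≠ 0) : 2 ∣ k := by
    by_contra h
    have := coeff_negT f k
    rw [hneg, Int.negOnePow_odd k (Int.odd_iff.mpr (by omega))] at this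
    simp only [Units.val_neg, Units.val_one, Int.cast_id, neg_one_mul] at this
    omega
  have hmem := mem_adjoin_T_add_T_neg 2 f (fun k => by rw [← invert_apply, hinv]) heven
  rw [Algebra.adjoin_singleton_eq_range_aeval] at hmem
  obtain ⟨P, hP⟩ := hmem
  exact ⟨P.comp (Polynomial.X + 2), by simpa [Polynomial.aeval_comp, map_ofNat] using hP⟩
end

section
/- For positive integers k and a, the quotient [ka]/[a] = Σ_{i=0}^{k−1} q^{(k−1)a/2 − ia} is a polynomial in y = q^{1/2} + q^{−1/2} − 2 with integer coefficients; moreover, if k is odd or a is even, then [ka]/[a] ∈ ℤ[t] (t = q + q^{−1} − 2) with constant term k. -/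
/-!
Multiplying by `[a] = T a - T (-a)`, with `T = q ^ (1/2)`, telescopes the sum `S_k` to `[k a]`.
The sum is palindromic: removing its two outer terms gives `S_(k+2) = S_k + T m + T (-m)` with
`m = (k + 1) a`, and `T (n c) + T (-(n c))` is the Dickson (rescaled Chebyshev) polynomial `D_n`
evaluated at `T c + T (-c)`. All exponents are multiples of `c = 1`, and of `c = 2` when `(k + 1) a`
is even, so `S_k` lies in `ℤ[T c + T (-c)] = ℤ[T c + T (-c) - 2]`. Evaluating at `T = 1` kills `t`
and sends `S_k` to `k`, which is therefore the constant term.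
-/

open LaurentPolynomial Polynomial

namespace LaurentPolynomial

variable {R : Type*} [CommRing R]

theorem T_add_T_neg_mem_adjoin_of_dvd {c m : ℤ} (h : c ∣ m) :
    (T m + T (-m) : R[T;T⁻¹]) ∈ Algebra.adjoin R {T c + T (-c)} := by
  have hnat (n : ℕ) :
      (T (n * c) + T (-(n * c)) : R[T;T⁻¹]) ∈ Algebra.adjoin R {T c + T (-c)} := by
    rw [Algebra.adjoin_singleton_eq_range_aeval]
    refine ⟨dickson 1 1 n, ?_⟩
    have hinv : (T c * T (-c) : R[T;T⁻¹]) = 1 := by rw [← T_add, add_neg_cancel, T_zero]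
    simp only [AlgHom.toRingHom_eq_coe, RingHom.coe_coe, aeval_def, ← eval_map, map_dickson,
      map_one, dickson_one_one_eval_add_inv _ _ hinv, T_pow, mul_neg]
  obtain ⟨j, rfl⟩ := h
  obtain ⟨n, rfl | rfl⟩ := Int.eq_nat_or_neg j
  · simpa [mul_comm] using hnat n
  · simpa [mul_comm, add_comm] using hnat n

/-- `[k a] / [a]` in the variable `T = q ^ (1/2)`. -/
noncomputable def qRatio (k a : ℕ) : R[T;T⁻¹] :=
  ∑ i ∈ Finset.range k, T (((k : ℤ) - 1) * a - 2 * i * a)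

theorem T_sub_T_neg_mul_qRatio (k a : ℕ) :
    (T a - T (-a)) * (qRatio k a : R[T;T⁻¹]) = T (k * a) - T (-(k * a)) := by
  have telescope : ∀ i ∈ Finset.range k,
      (T a - T (-a)) * (T (((k : ℤ) - 1) * a - 2 * i * a) : R[T;T⁻¹])
        = T (k * a - 2 * i * a) - T (k * a - 2 * (i + 1 : ℕ) * a) := by
    intro i _
    rw [sub_mul, ← T_add, ← T_add]
    congr 2 <;> push_cast <;> ring
  rw [qRatio, Finset.mul_sum, Finset.sum_congr rfl telescope, Finset.sum_range_sub']
  congr 2 <;> ring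

theorem qRatio_add_two (k a : ℕ) :
    (qRatio (k + 2) a : R[T;T⁻¹]) = qRatio k a + (T ((k + 1) * a) + T (-((k + 1) * a))) := by
  rw [qRatio, qRatio, Finset.sum_range_succ', Finset.sum_range_succ]
  push_cast
  have shift : ∀ i ∈ Finset.range k,
      (T (((k : ℤ) + 2 - 1) * a - 2 * (i + 1 : ℤ) * a) : R[T;T⁻¹])
        = T (((k : ℤ) - 1) * a - 2 * i * a) :=
    fun i _ => by congr 1; ring
  rw [Finset.sum_congr rfl shift, add_right_comm, add_assoc]
  congr 3 <;> ring

theorem qRatio_mem_adjoin {c : ℤ} {k a : ℕ} (hc : c ∣ 2 * a) (hk : c ∣ (k + 1) * a) :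
    (qRatio k a : R[T;T⁻¹]) ∈ Algebra.adjoin R {T c + T (-c)} := by
  induction k using Nat.twoStepInduction with
  | zero => simp [qRatio]
  | one => simp [qRatio]
  | more k ih _ =>
    rw [qRatio_add_two]
    have hk' : c ∣ ((k : ℤ) + 1) * a := by
      have : ((k : ℤ) + 1) * a = ((k + 2 : ℕ) + 1) * a - 2 * a := by push_cast; ring
      exact this ▸ dvd_sub hk hc
    exact Subalgebra.add_mem _ (ih hk') (T_add_T_neg_mem_adjoin_of_dvd hk')

noncomputable def evalOne : R[T;T⁻¹] →ₐ[R] R := AddMonoidAlgebra.lift R R ℤ 1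

@[simp]
theorem evalOne_T (n : ℤ) : evalOne (T n : R[T;T⁻¹]) = 1 := by
  rw [evalOne, T, AddMonoidAlgebra.lift_single]
  simp

theorem evalOne_T_add_T_neg_sub_two (c : ℤ) : evalOne (T c + T (-c) - 2 : R[T;T⁻¹]) = 0 := by
  rw [map_sub, map_add, evalOne_T, evalOne_T, map_ofNat]
  norm_num

theorem evalOne_qRatio (k a : ℕ) : evalOne (qRatio k a : R[T;T⁻¹]) = k := by
  simp [qRatio]

end LaurentPolynomial

theorem Algebra.adjoin_singleton_sub_algebraMap {R A : Type*} [CommRing R] [Ring A] [Algebra R A]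
    (x : A) (r : R) : Algebra.adjoin R {x - algebraMap R A r} = Algebra.adjoin R {x} := by
  apply le_antisymm <;> apply Algebra.adjoin_singleton_le
  · exact sub_mem (Algebra.self_mem_adjoin_singleton R x) (Subalgebra.algebraMap_mem _ r)
  · simpa using add_mem (Algebra.self_mem_adjoin_singleton R (x - algebraMap R A r))
      (Subalgebra.algebraMap_mem _ r)

theorem Polynomial.coeff_zero_eq_of_aeval_eq {R A : Type*} [CommSemiring R] [Semiring A]
    [Algebra R A] (φ : A →ₐ[R] R) {x : A} (hx : φ x = 0) (p : R[X]) :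
    p.coeff 0 = φ (aeval x p) := by
  rw [← aeval_algHom_apply, hx, coeff_zero_eq_aeval_zero]

open LaurentPolynomial in
theorem qnum_ratio_general (k a : ℕ) :
    ((T ((k * a : ℕ) : ℤ) - T (-((k * a : ℕ) : ℤ)) : LaurentPolynomial ℤ)
        = (T (a : ℤ) - T (-(a : ℤ))) *
            ∑ i ∈ Finset.range k, T (((k : ℤ) - 1) * a - 2 * i * a)) ∧
    (∃ P : Polynomial ℤ,
        Polynomial.aeval (T 1 + T (-1) - 2 : LaurentPolynomial ℤ) P
          = ∑ i ∈ Finset.range k, T (((k : ℤ) - 1) * a - 2 * i * a)) ∧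
    ((Odd k ∨ Even a) →
      ∃ P : Polynomial ℤ,
        Polynomial.aeval (T 2 + T (-2) - 2 : LaurentPolynomial ℤ) P
            = ∑ i ∈ Finset.range k, T (((k : ℤ) - 1) * a - 2 * i * a) ∧
          P.coeff 0 = k) := by
  have shifted (c : ℤ) (h : (qRatio k a : ℤ[T;T⁻¹]) ∈ Algebra.adjoin ℤ {T c + T (-c)}) :
      ∃ P : ℤ[X], aeval (T c + T (-c) - 2 : ℤ[T;T⁻¹]) P = qRatio k a := by
    rwa [← Algebra.adjoin_singleton_sub_algebraMap _ (2 : ℤ), map_ofNat,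
      Algebra.adjoin_singleton_eq_range_aeval] at h
  refine ⟨?_, shifted 1 (qRatio_mem_adjoin (one_dvd _) (one_dvd _)), fun hka => ?_⟩
  · push_cast
    exact (T_sub_T_neg_mul_qRatio k a).symm
  have h2 : (2 : ℤ) ∣ ((k : ℤ) + 1) * a := by
    rwa [← even_iff_two_dvd, Int.even_mul, Int.even_add_one, Int.even_coe_nat, Int.even_coe_nat,
      Nat.not_even_iff_odd]
  obtain ⟨P, hP⟩ := shifted 2 (qRatio_mem_adjoin (dvd_mul_right 2 _) h2)
  refine ⟨P, hP, ?_⟩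
  rw [coeff_zero_eq_of_aeval_eq evalOne (evalOne_T_add_T_neg_sub_two 2) P, hP, evalOne_qRatio]

open LaurentPolynomial in
/-- For positive integers k, a: [ka]/[a] = Σ_{i=0}^{k−1} q^{(k−1)a/2 − ia}, it is a
polynomial in y = q^{1/2} + q^{−1/2} − 2 with integer coefficients, and if k is odd
or a is even it lies in ℤ[t] (t = q + q^{−1} − 2) with constant term k.
Here T is q^{1/2}, [n] = T n − T (−n), and q^{(k−1)a/2 − ia} = T((k−1)a − 2ia). -/
theorem qnum_ratio (k a : ℕ) (hk : 0 < k) (ha : 0 < a) :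
    ((T ((k * a : ℕ) : ℤ) - T (-((k * a : ℕ) : ℤ)) : LaurentPolynomial ℤ)
        = (T (a : ℤ) - T (-(a : ℤ))) *
            ∑ i ∈ Finset.range k, T (((k : ℤ) - 1) * a - 2 * i * a)) ∧
    (∃ P : Polynomial ℤ,
        Polynomial.aeval (T 1 + T (-1) - 2 : LaurentPolynomial ℤ) P
          = ∑ i ∈ Finset.range k, T (((k : ℤ) - 1) * a - 2 * i * a)) ∧
    ((Odd k ∨ Even a) →
      ∃ P : Polynomial ℤ,
        Polynomial.aeval (T 2 + T (-2) - 2 : LaurentPolynomial ℤ) P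
            = ∑ i ∈ Finset.range k, T (((k : ℤ) - 1) * a - 2 * i * a) ∧
          P.coeff 0 = k) :=
  qnum_ratio_general k a
end

section
/- For a positive integer k even and a odd positive, the remainder of [ka]/[a] ∈ ℤ[y] upon division by y(y+4) equals k(1 + y/2), i.e., [ka]/[a] ≡ k + (k/2)y mod y(y+4) in ℚ[y]. -/
/-!
Specialise q^{1/2} to 1 and to -1, i.e. y to 0 and to -4. At q^{1/2} = 1 each of the k terms of
[ka]/[a] equals 1, and at q^{1/2} = -1 each exponent (k-1)a - 2ia is odd, so each term equals -1.
Hence P - (k + (k/2) y) vanishes at y = 0 and at y = -4, and is divisible by the product of the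
coprime factors y and y + 4.
-/

namespace Polynomial

theorem mul_X_sub_C_dvd_of_isRoot {R : Type*} [CommRing R] {p : R[X]} {a b : R}
    (hab : IsUnit (a - b)) (ha : p.IsRoot a) (hb : p.IsRoot b) : (X - C a) * (X - C b) ∣ p :=
  (isCoprime_X_sub_C_of_isUnit_sub hab).mul_dvd (dvd_iff_isRoot.2 ha) (dvd_iff_isRoot.2 hb)

end Polynomial

namespace LaurentPolynomial

open Polynomial

variable {R : Type*} [CommRing R] (u : Rˣ)

theorem eval₂_aeval (x : R[T;T⁻¹]) (p : R[X]) :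
    eval₂ (RingHom.id R) u (aeval x p) = p.eval (eval₂ (RingHom.id R) u x) := by
  rw [aeval_def, hom_eval₂, Polynomial.eval]
  congr 1
  ext r
  simp

theorem eval₂_T_add_T_neg_sub_two :
    eval₂ (RingHom.id R) u (T 1 + T (-1) - 2) = u + (u⁻¹ : Rˣ) - 2 := by
  rw [map_sub, map_add, eval₂_T, eval₂_T, map_ofNat, zpow_one, zpow_neg_one]

end LaurentPolynomial

theorem Int.odd_sub_one_mul_sub_two_mul_mul {k a : ℤ} (hk : Even k) (ha : Odd a) (i : ℤ) :
    Odd ((k - 1) * a - 2 * i * a) :=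
  ((hk.sub_odd odd_one).mul ha).sub_even ⟨i * a, by ring⟩

open LaurentPolynomial in
theorem qnum_ratio_remainder_general (k a : ℕ) (hke : Even k) (ha : Odd a)
    (P : Polynomial ℚ)
    (hP : Polynomial.aeval (T 1 + T (-1) - 2 : LaurentPolynomial ℚ) P
        = ∑ i ∈ Finset.range k, T (((k : ℤ) - 1) * a - 2 * i * a)) :
    (Polynomial.X * (Polynomial.X + 4)) ∣
      (P - (Polynomial.C (k : ℚ) + Polynomial.C ((k : ℚ) / 2) * Polynomial.X)) := by
  have hodd (i : ℕ) : Odd (((k : ℤ) - 1) * a - 2 * i * a) :=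
    Int.odd_sub_one_mul_sub_two_mul_mul ((Int.even_coe_nat k).2 hke) ((Int.odd_coe_nat a).2 ha) i
  have h₀ : P.eval 0 = k := by
    have h := congrArg (eval₂ (RingHom.id ℚ) 1) hP
    rw [eval₂_aeval, eval₂_T_add_T_neg_sub_two] at h
    norm_num at h
    exact h
  have h₄ : P.eval (-4) = -k := by
    have h := congrArg (eval₂ (RingHom.id ℚ) (-1)) hP
    rw [eval₂_aeval, eval₂_T_add_T_neg_sub_two] at h
    simp only [map_sum, eval₂_T, Units.val_zpow_eq_zpow_val, Units.val_neg, Units.val_one] at h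
    rw [Finset.sum_congr rfl fun i _ => (hodd i).neg_one_zpow] at h
    norm_num at h
    exact h
  have hdvd := Polynomial.mul_X_sub_C_dvd_of_isRoot
    (p := P - (Polynomial.C (k : ℚ) + Polynomial.C ((k : ℚ) / 2) * Polynomial.X))
    (a := 0) (b := -4) (by norm_num) (by simp [h₀]) (by simp [h₄]; ring)
  rwa [Polynomial.C_0, sub_zero, Polynomial.C_neg, sub_neg_eq_add, Polynomial.C_ofNat] at hdvd

open LaurentPolynomial in
/-- For k even and a odd positive, the remainder of [ka]/[a] ∈ ℤ[y] upon division by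
y(y+4) equals k(1 + y/2): if P ∈ ℚ[Y] satisfies P(y) = [ka]/[a]
(with y = q^{1/2} + q^{−1/2} − 2, T = q^{1/2} and
[ka]/[a] = Σ_{i=0}^{k−1} T((k−1)a − 2ia)), then
Y(Y+4) ∣ P − (k + (k/2)·Y) in ℚ[Y]. -/
theorem qnum_ratio_remainder (k a : ℕ) (hk : 0 < k) (hke : Even k) (ha : Odd a)
    (P : Polynomial ℚ)
    (hP : Polynomial.aeval (T 1 + T (-1) - 2 : LaurentPolynomial ℚ) P
        = ∑ i ∈ Finset.range k, T (((k : ℤ) - 1) * a - 2 * i * a)) :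
    (Polynomial.X * (Polynomial.X + 4)) ∣
      (P - (Polynomial.C (k : ℚ) + Polynomial.C ((k : ℚ) / 2) * Polynomial.X)) :=
  qnum_ratio_remainder_general k a hke ha P hP
end

section
/- Let a, b, c be positive integers with gcd(a,b,c) = 1. Then the rational function [lcm(a,b,c)]·[gcd(a,b)]·[gcd(b,c)]·[gcd(c,a)] / ([a][b][c][1]) is a polynomial in t = q + q^{−1} − 2 with integer coefficients, and its constant term (value at t = 0, i.e., q = 1) is 1. -/
/-!
Put `q = T 2`, so that `[n] = q^{-n/2} (q^n - 1)` and `q^n - 1 = ∏_{d ∣ n} Φ_d(q)`. For each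
`d ∣ L = lcm(a,b,c)`, the number of `a, b, c, 1` that `d` divides equals the number of
`L, gcd(a,b), gcd(b,c), gcd(c,a)` it divides unless `d` divides none of `a, b, c` (for the index
`1` this uses `gcd(a,b,c) = 1`). Hence the ratio is `q^{-k} E(q)`, where `E` is the product of the
`Φ_d` over those remaining `d` and `deg E = 2k`: such a `d` is not a prime power, so `d ≥ 3` makes
`φ(d)` even and `Φ_d(1) = 1`. Since each `q^n - 1` is antipalindromic, `E` is palindromic, so
`q^{-k} E(q)` is invariant under `q ↦ q⁻¹` and thus a polynomial in `q + q⁻¹ = t + 2`; its value at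
`q = 1` is `E(1) = 1`.
-/

open Polynomial LaurentPolynomial

theorem Nat.Prime.pow_dvd_or_pow_dvd_of_dvd_lcm {p k m n : ℕ} (hp : p.Prime) (hm : m ≠ 0)
    (hn : n ≠ 0) (h : p ^ k ∣ m.lcm n) : p ^ k ∣ m ∨ p ^ k ∣ n := by
  simpa only [hp.pow_dvd_iff_le_factorization, hm, hn, Nat.lcm_ne_zero, Nat.factorization_lcm,
    Finsupp.sup_apply, le_sup_iff, ne_eq, not_false_eq_true] using h

theorem Polynomial.reverse_X_pow_sub_one {R : Type*} [CommRing R] [Nontrivial R] (n : ℕ) :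
    (X ^ n - 1 : R[X]).reverse = -(X ^ n - 1) := by
  have h : (X ^ n : R[X]).reverse = 1 := by
    rw [← mul_one (X ^ n), ← C_1, reverse_X_pow_mul, reverse_C]
  rw [sub_eq_add_neg, ← C_1, ← C_neg, reverse_add_C, natDegree_X_pow, h, C_neg, C_1]
  ring

theorem ne_prime_pow_of_dvd_lcm_of_not_dvd {a b c d : ℕ} (ha : a ≠ 0) (hb : b ≠ 0) (hc : c ≠ 0)
    (hd : d ∣ a.lcm (b.lcm c)) (hnd : ¬(d ∣ a ∨ d ∣ b ∨ d ∣ c)) {p : ℕ} (hp : p.Prime) (k : ℕ) :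
    p ^ k ≠ d := by
  rintro rfl
  refine hnd ((hp.pow_dvd_or_pow_dvd_of_dvd_lcm ha (Nat.lcm_ne_zero hb hc) hd).imp_right ?_)
  exact hp.pow_dvd_or_pow_dvd_of_dvd_lcm hb hc

noncomputable def lcmGcdQuotient (a b c : ℕ) : ℤ[X] :=
  ∏ d ∈ (a.lcm (b.lcm c)).divisors with ¬(d ∣ a ∨ d ∣ b ∨ d ∣ c), cyclotomic d ℤ

section lcmGcdQuotient

variable {a b c : ℕ} (ha : 0 < a) (hb : 0 < b) (hc : 0 < c)
include ha hb hc

theorem X_pow_sub_one_mul_lcmGcdQuotient (h : a.gcd (b.gcd c) = 1) :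
    (X ^ a - 1) * (X ^ b - 1) * (X ^ c - 1) * (X ^ 1 - 1) * lcmGcdQuotient a b c =
      (X ^ a.lcm (b.lcm c) - 1) * (X ^ a.gcd b - 1) * (X ^ b.gcd c - 1) * (X ^ c.gcd a - 1) := by
  set L := a.lcm (b.lcm c)
  have hL : L ≠ 0 := Nat.lcm_ne_zero ha.ne' (Nat.lcm_ne_zero hb.ne' hc.ne')
  have hdiv {n : ℕ} (hn : 0 < n) (hnL : n ∣ L) :
      (X ^ n - 1 : ℤ[X]) = ∏ d ∈ L.divisors, if d ∣ n then cyclotomic d ℤ else 1 := by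
    rw [← prod_cyclotomic_eq_X_pow_sub_one hn, ← Nat.divisors_filter_dvd_of_dvd hL hnL,
      Finset.prod_filter]
  have haL : a ∣ L := Nat.dvd_lcm_left _ _
  have hbL : b ∣ L := (Nat.dvd_lcm_left b c).trans (Nat.dvd_lcm_right _ _)
  have hcL : c ∣ L := (Nat.dvd_lcm_right b c).trans (Nat.dvd_lcm_right _ _)
  rw [hdiv ha haL, hdiv hb hbL, hdiv hc hcL, hdiv one_pos (one_dvd _),
    hdiv (Nat.pos_of_ne_zero hL) dvd_rfl,
    hdiv (Nat.gcd_pos_of_pos_left b ha) ((Nat.gcd_dvd_left a b).trans haL),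
    hdiv (Nat.gcd_pos_of_pos_left c hb) ((Nat.gcd_dvd_left b c).trans hbL),
    hdiv (Nat.gcd_pos_of_pos_left a hc) ((Nat.gcd_dvd_left c a).trans hcL),
    lcmGcdQuotient, Finset.prod_filter]
  iterate 7 rw [← Finset.prod_mul_distrib]
  refine Finset.prod_congr rfl fun d hd => ?_
  have hdL : d ∣ L := Nat.dvd_of_mem_divisors hd
  have h1 : d ∣ 1 ↔ d ∣ a ∧ d ∣ b ∧ d ∣ c := by rw [← h, Nat.dvd_gcd_iff, Nat.dvd_gcd_iff]
  by_cases hda : d ∣ a <;> by_cases hdb : d ∣ b <;> by_cases hdc : d ∣ c <;>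
    simp [hda, hdb, hdc, hdL, h1, Nat.dvd_gcd_iff]

theorem natDegree_lcmGcdQuotient_add (h : a.gcd (b.gcd c) = 1) :
    a + b + c + 1 + (lcmGcdQuotient a b c).natDegree =
      a.lcm (b.lcm c) + a.gcd b + b.gcd c + c.gcd a := by
  have hpos {n : ℕ} (hn : 0 < n) : (X ^ n - 1 : ℤ[X]) ≠ 0 := X_pow_sub_C_ne_zero hn 1
  have hE : lcmGcdQuotient a b c ≠ 0 :=
    Finset.prod_ne_zero_iff.mpr fun d _ => cyclotomic_ne_zero d ℤ
  have := congrArg natDegree (X_pow_sub_one_mul_lcmGcdQuotient ha hb hc h)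
  have hdeg (n : ℕ) : (X ^ n - 1 : ℤ[X]).natDegree = n := by
    simpa using natDegree_X_pow_sub_C (n := n) (r := (1 : ℤ))
  simpa only [natDegree_mul, ne_eq, mul_eq_zero, hpos, ha, hb, hc, hE, one_pos, hdeg,
    Nat.lcm_pos ha (Nat.lcm_pos hb hc), Nat.gcd_pos_of_pos_left b ha, Nat.gcd_pos_of_pos_left c hb,
    Nat.gcd_pos_of_pos_left a hc, not_false_eq_true, or_self]
    using this

theorem even_natDegree_lcmGcdQuotient : Even (lcmGcdQuotient a b c).natDegree := by
  rw [lcmGcdQuotient, natDegree_prod _ _ fun d _ => cyclotomic_ne_zero d ℤ]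
  refine Finset.even_sum _ fun d hd => ?_
  obtain ⟨hdL, hnd⟩ := Finset.mem_filter.mp hd
  have hpow := ne_prime_pow_of_dvd_lcm_of_not_dvd ha.ne' hb.ne' hc.ne'
    (Nat.dvd_of_mem_divisors hdL) hnd Nat.prime_two
  have h1 : 1 ≠ d := by simpa using hpow 0
  have h2 : 2 ≠ d := by simpa using hpow 1
  have h0 := Nat.pos_of_mem_divisors hdL
  rw [natDegree_cyclotomic]
  exact Nat.totient_even (by omega)

theorem eval_one_lcmGcdQuotient : (lcmGcdQuotient a b c).eval 1 = 1 := by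
  rw [lcmGcdQuotient, eval_prod]
  refine Finset.prod_eq_one fun d hd => ?_
  obtain ⟨hdL, hnd⟩ := Finset.mem_filter.mp hd
  exact eval_one_cyclotomic_not_prime_pow
    (ne_prime_pow_of_dvd_lcm_of_not_dvd ha.ne' hb.ne' hc.ne' (Nat.dvd_of_mem_divisors hdL) hnd)

theorem reverse_lcmGcdQuotient (h : a.gcd (b.gcd c) = 1) :
    (lcmGcdQuotient a b c).reverse = lcmGcdQuotient a b c := by
  have hfac := X_pow_sub_one_mul_lcmGcdQuotient ha hb hc h
  have hrev := congrArg reverse hfac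
  simp only [reverse_mul_of_domain, reverse_X_pow_sub_one, neg_mul, mul_neg, neg_neg] at hrev
  rw [← hfac] at hrev
  exact mul_left_cancel₀ (mul_ne_zero (mul_ne_zero (mul_ne_zero (X_pow_sub_C_ne_zero ha 1)
    (X_pow_sub_C_ne_zero hb 1)) (X_pow_sub_C_ne_zero hc 1)) (X_pow_sub_C_ne_zero one_pos 1)) hrev

end lcmGcdQuotient

namespace LaurentPolynomial

variable {R : Type*} [CommRing R]

theorem exists_aeval_T_add_T_neg_eq (n : ℤ) :
    ∃ P : R[X], aeval (T 1 + T (-1) : R[T;T⁻¹]) P = T n + T (-n) := by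
  have hT : (T 1 : R[T;T⁻¹]) * T (-1) = 1 := by rw [← T_add, add_neg_cancel, T_zero]
  have key (m : ℕ) : aeval (T 1 + T (-1) : R[T;T⁻¹]) (dickson 1 (1 : R) m) = T m + T (-m) := by
    rw [aeval_def, eval₂_eq_eval_map, map_dickson, map_one, dickson_one_one_eval_add_inv _ _ hT,
      T_pow, T_pow, mul_one, mul_neg_one]
  obtain ⟨m, rfl | rfl⟩ := Int.eq_nat_or_neg n
  · exact ⟨_, key m⟩
  · exact ⟨_, by rw [key m, neg_neg, add_comm]⟩

theorem exists_aeval_T_add_T_neg_eq_add_invert (f : R[T;T⁻¹]) :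
    ∃ P : R[X], aeval (T 1 + T (-1) : R[T;T⁻¹]) P = f + invert f := by
  induction f using LaurentPolynomial.induction_on' with
  | add f g hf hg =>
    obtain ⟨P, hP⟩ := hf
    obtain ⟨Q, hQ⟩ := hg
    exact ⟨P + Q, by rw [map_add, hP, hQ, map_add]; ring⟩
  | C_mul_T n r =>
    obtain ⟨P, hP⟩ := exists_aeval_T_add_T_neg_eq (R := R) n
    exact ⟨Polynomial.C r * P, by
      rw [map_mul, aeval_C, hP, map_mul, invert_C, invert_T, ← C_eq_algebraMap, mul_add]⟩

theorem exists_aeval_T_add_T_neg_eq_of_invert_eq {f : R[T;T⁻¹]} (hf : invert f = f) :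
    ∃ P : R[X], aeval (T 1 + T (-1) : R[T;T⁻¹]) P = f := by
  obtain ⟨P, hP⟩ :=
    exists_aeval_T_add_T_neg_eq_add_invert (AddMonoidAlgebra.ofCoeff (f.coeff.filter (0 < ·)))
  refine ⟨P + Polynomial.C (f.coeff 0), ?_⟩
  rw [map_add, hP, aeval_C, ← C_eq_algebraMap]
  -- `f = g + invert g + C (f.coeff 0)`, where `g` keeps the terms of `f` of positive degree
  ext n
  have hsymm : f.coeff (-n) = f.coeff n := by rw [← invert_apply, hf]
  simp only [AddMonoidAlgebra.coeff_add, Finsupp.add_apply, invert_apply, C_apply,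
    Finsupp.filter_apply]
  rcases lt_trichotomy n 0 with hn | rfl | hn
  · simp [hn, hn.ne, hsymm, hn.asymm]
  · simp
  · simp [hn, hn.ne', hn.asymm]

theorem invert_T_neg_mul_toLaurent_of_reverse_eq {E : R[X]} {k : ℕ} (hE : E.reverse = E)
    (hk : E.natDegree = 2 * k) :
    invert (T (-k) * toLaurent E : R[T;T⁻¹]) = T (-k) * toLaurent E := by
  have h := toLaurent_reverse E
  rw [hE, hk] at h
  rw [map_mul, invert_T, neg_neg]
  conv_rhs => rw [h]
  rw [mul_left_comm (T _), ← T_add, mul_comm]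
  congr 2
  push_cast
  ring

theorem T_sub_T_neg_eq (n : ℕ) :
    (T n - T (-n) : R[T;T⁻¹]) = T (-n) * aeval (T 2) (X ^ n - 1 : R[X]) := by
  rw [map_sub, map_pow, aeval_X, map_one, T_pow, mul_sub, mul_one, ← T_add]
  congr 2
  ring

theorem T_neg_two_pow_mul_aeval_mul_T_sub_T_neg_eq_of_mul_eq {a b c d l m n o k : ℕ} {E : R[X]}
    (hE : (X ^ a - 1) * (X ^ b - 1) * (X ^ c - 1) * (X ^ d - 1) * E =
      (X ^ l - 1) * (X ^ m - 1) * (X ^ n - 1) * (X ^ o - 1))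
    (hdeg : a + b + c + d + 2 * k = l + m + n + o) :
    T (-2) ^ k * aeval (T 2) E *
        ((T a - T (-a)) * (T b - T (-b)) * (T c - T (-c)) * (T d - T (-d)) : R[T;T⁻¹]) =
      (T l - T (-l)) * (T m - T (-m)) * (T n - T (-n)) * (T o - T (-o)) := by
  have hT : (T (-2) ^ k * (T (-a) * T (-b) * T (-c) * T (-d)) : R[T;T⁻¹]) =
      T (-l) * T (-m) * T (-n) * T (-o) := by
    simp only [T_pow, ← T_add]
    congr 1
    omega
  have hq := congrArg (aeval (T 2 : R[T;T⁻¹])) hE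
  simp only [map_mul] at hq
  simp only [T_sub_T_neg_eq]
  linear_combination (T (-2) ^ k * (T (-a) * T (-b) * T (-c) * T (-d))) * hq +
    aeval (T 2) (X ^ l - 1 : R[X]) * aeval (T 2) (X ^ m - 1 : R[X]) *
      aeval (T 2) (X ^ n - 1 : R[X]) * aeval (T 2) (X ^ o - 1 : R[X]) * hT

universe u

theorem exists_aeval_add_eq_of_reverse_eq {E : R[X]} {k : ℕ} (hE : E.reverse = E)
    (hk : E.natDegree = 2 * k) :
    ∃ P : R[X], ∀ {S : Type u} [CommRing S] [Algebra R S] (x y : S), x * y = 1 →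
      aeval (x + y) P = y ^ k * aeval x E := by
  obtain ⟨P, hP⟩ :=
    exists_aeval_T_add_T_neg_eq_of_invert_eq (invert_T_neg_mul_toLaurent_of_reverse_eq hE hk)
  refine ⟨P, fun {S} _ _ x y hxy => ?_⟩
  let u : Sˣ := ⟨x, y, hxy, by rw [mul_comm, hxy]⟩
  have hφ : (eval₂ (algebraMap R S) u).comp (algebraMap R R[T;T⁻¹]) = algebraMap R S := by
    ext r
    simp
  have := congrArg (eval₂ (algebraMap R S) u) hP
  rwa [aeval_def, hom_eval₂, hφ, map_add, eval₂_T, eval₂_T, map_mul, eval₂_T_neg_n,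
    eval₂_toLaurent, ← aeval_def, ← aeval_def, zpow_one, zpow_neg_one] at this

end LaurentPolynomial

open LaurentPolynomial in
/-- Here `T 1` is `q^{1/2}`, so `[n] = T n − T (−n)` and `t = T 2 + T (−2) − 2`. -/
theorem lcm_gcd_qnum_ratio (a b c : ℕ) (ha : 0 < a) (hb : 0 < b) (hc : 0 < c)
    (h : Nat.gcd a (Nat.gcd b c) = 1) :
    ∃ P : Polynomial ℤ,
      Polynomial.aeval (T 2 + T (-2) - 2 : LaurentPolynomial ℤ) P *
          ((T (a : ℤ) - T (-(a : ℤ))) * (T (b : ℤ) - T (-(b : ℤ))) *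
            (T (c : ℤ) - T (-(c : ℤ))) * (T 1 - T (-1)))
        = (T ((Nat.lcm a (Nat.lcm b c) : ℕ) : ℤ) - T (-((Nat.lcm a (Nat.lcm b c) : ℕ) : ℤ))) *
            (T ((Nat.gcd a b : ℕ) : ℤ) - T (-((Nat.gcd a b : ℕ) : ℤ))) *
            (T ((Nat.gcd b c : ℕ) : ℤ) - T (-((Nat.gcd b c : ℕ) : ℤ))) *
            (T ((Nat.gcd c a : ℕ) : ℤ) - T (-((Nat.gcd c a : ℕ) : ℤ))) ∧
      P.coeff 0 = 1 := by
  set E := lcmGcdQuotient a b c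
  obtain ⟨k, hk⟩ := (even_natDegree_lcmGcdQuotient ha hb hc).two_dvd
  obtain ⟨P, hP⟩ := exists_aeval_add_eq_of_reverse_eq (reverse_lcmGcdQuotient ha hb hc h) hk
  have hdeg := natDegree_lcmGcdQuotient_add ha hb hc h
  have hT2 : (T 2 : ℤ[T;T⁻¹]) * T (-2) = 1 := by rw [← T_add]; rfl
  refine ⟨P.comp (X + 2), ?_, ?_⟩
  · have hPt : aeval (T 2 + T (-2) - 2 : ℤ[T;T⁻¹]) (P.comp (X + 2)) =
        T (-2) ^ k * aeval (T 2) E := by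
      rw [aeval_comp, map_add, aeval_X, map_ofNat, sub_add_cancel, hP _ _ hT2]
    rw [hPt]
    exact_mod_cast T_neg_two_pow_mul_aeval_mul_T_sub_T_neg_eq_of_mul_eq
      (X_pow_sub_one_mul_lcmGcdQuotient ha hb hc h) (by omega)
  · rw [coeff_zero_eq_eval_zero, eval_comp]
    simpa [eval_one_lcmGcdQuotient ha hb hc] using hP (1 : ℤ) 1 (mul_one 1)
end

section
/- Let λ be a partition and k a positive integer with k odd or |λ| even. Then [kλ]/[λ] = k^{l(λ)} + t·u(t) for some u ∈ ℤ[t] of degree (k−1)|λ|/2 − 1, where t = [1]^2. -/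
/-!
Put `y = T 1 + T (-1)`, so that `y ^ 2 - 4 = t`. With the Chebyshev polynomials normalised by
`Cₙ(x + x⁻¹) = xⁿ + x⁻ⁿ` and `Sₘ(x + x⁻¹) (x - x⁻¹) = xᵐ⁺¹ - x⁻⁽ᵐ⁺¹⁾`, taking `x = Tⁿ` gives
`[(m + 1) n] = [n] · (Sₘ ∘ Cₙ)(y)`. So `[kλ] = [λ] · W(y)`, where `W = ∏ᵢ S_{k-1} ∘ C_{λᵢ}` has degree
`(k - 1)|λ|`, satisfies `W(2) = k^{l(λ)}`, and is even or odd according to the parity of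
`(k - 1)|λ|`. When that number is even, `W(y) = V(y²)` with `deg V = (k - 1)|λ|/2`, and the Taylor
expansion of `V` at `4` gives `W(y) = V(4) + t · u(t) = k^{l(λ)} + t · u(t)` with `deg u = deg V - 1`.
-/

open Polynomial LaurentPolynomial

namespace Polynomial.Chebyshev

variable {R : Type*} [CommRing R]

theorem C_eval_add_of_mul_eq_one {x y : R} (h : x * y = 1) (n : ℕ) :
    (C R n).eval (x + y) = x ^ n + y ^ n := by
  rw [← dickson_one_one_eq_chebyshev_C, dickson_one_one_eval_add_inv x y h]

theorem S_eval_add_mul_sub_of_mul_eq_one {x y : R} (h : x * y = 1) :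
    ∀ n : ℕ, (S R n).eval (x + y) * (x - y) = x ^ (n + 1) - y ^ (n + 1)
  | 0 => by simp
  | 1 => by simp only [Nat.cast_one, S_one, eval_X, Nat.reduceAdd]; ring
  | n + 2 => by
    have h0 := S_eval_add_mul_sub_of_mul_eq_one h n
    have h1 := S_eval_add_mul_sub_of_mul_eq_one h (n + 1)
    push_cast at h1 ⊢
    rw [S_add_two, eval_sub, eval_mul, eval_X]
    linear_combination (x + y) * h1 - h0 + (x ^ (n + 1) - y ^ (n + 1)) * h

theorem C_comp_neg_X : ∀ n : ℕ, (C R n).comp (-X) = (-1) ^ n * C R n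
  | 0 => by simp
  | 1 => by simp
  | n + 2 => by
    have h0 := C_comp_neg_X n
    have h1 := C_comp_neg_X (n + 1)
    push_cast at h1 ⊢
    rw [C_add_two, sub_comp, mul_comp, X_comp, h0, h1]
    ring

theorem S_comp_neg_X : ∀ n : ℕ, (S R n).comp (-X) = (-1) ^ n * S R n
  | 0 => by simp
  | 1 => by simp
  | n + 2 => by
    have h0 := S_comp_neg_X n
    have h1 := S_comp_neg_X (n + 1)
    push_cast at h1 ⊢
    rw [S_add_two, sub_comp, mul_comp, X_comp, h0, h1]
    ring

variable [IsDomain R] [NeZero (2 : R)]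

theorem natDegree_S_natCast (n : ℕ) : (S R n).natDegree = n := by
  have h := congrArg natDegree (S_comp_two_mul_X R n)
  rwa [natDegree_comp, natDegree_U_natCast, ← map_ofNat Polynomial.C 2,
    natDegree_C_mul_X _ two_ne_zero, mul_one] at h

theorem natDegree_C_natCast (n : ℕ) : (C R n).natDegree = n := by
  have h := congrArg natDegree (C_comp_two_mul_X R n)
  rwa [natDegree_comp, ← map_ofNat Polynomial.C 2, natDegree_C_mul_X _ two_ne_zero, mul_one,
    natDegree_C_mul two_ne_zero, natDegree_T, Int.natAbs_natCast] at h

end Polynomial.Chebyshev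

namespace Polynomial

variable {R : Type*} [CommRing R]

theorem list_prod_comp_neg_X {ι : Type*} (L : List ι) (f : ι → R[X]) (d : ι → ℕ)
    (h : ∀ i, (f i).comp (-X) = (-1) ^ d i * f i) :
    (L.map f).prod.comp (-X) = (-1) ^ (L.map d).sum * (L.map f).prod := by
  induction L with
  | nil => simp
  | cons i L ih =>
    simp only [List.map_cons, List.prod_cons, List.sum_cons, mul_comp, h, ih]
    ring

theorem expand_contract_two_of_comp_neg_X [IsAddTorsionFree R] {p : R[X]}
    (hp : p.comp (-X) = p) : expand R 2 (contract 2 p) = p := by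
  ext i
  rw [coeff_expand two_pos, coeff_contract two_ne_zero]
  split_ifs with hi
  · rw [Nat.div_mul_cancel hi]
  · have hcoeff := congrArg (coeff · i) hp
    rw [show (-X : R[X]) = C (-1) * X by simp, comp_C_mul_X_coeff,
      (Nat.odd_iff.mpr (Nat.two_dvd_ne_zero.mp hi)).neg_one_pow, mul_neg_one] at hcoeff
    exact (self_eq_neg.mp hcoeff.symm).symm

variable {A : Type*} [CommRing A] [Algebra R A]

theorem aeval_add_algebraMap (p : R[X]) (r : R) (x : A) :
    aeval (x + algebraMap R A r) p = algebraMap R A (p.eval r) + x * aeval x (taylor r p).divX := by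
  have htaylor : aeval x (taylor r p) = aeval (x + algebraMap R A r) p := by
    rw [taylor_apply, aeval_comp, map_add, aeval_X, aeval_C]
  rw [← htaylor, ← taylor_coeff_zero]
  conv_lhs => rw [← X_mul_divX_add (taylor r p)]
  rw [map_add, map_mul, aeval_X, aeval_C, add_comm]

theorem exists_aeval_eq_eval_add_mul_of_comp_neg_X [IsAddTorsionFree R] {p : R[X]}
    (hp : p.comp (-X) = p) (a : R) (x : A) :
    ∃ u : R[X], aeval x p = algebraMap R A (p.eval a)
        + (x ^ 2 - algebraMap R A (a ^ 2)) * aeval (x ^ 2 - algebraMap R A (a ^ 2)) u ∧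
      u.natDegree = p.natDegree / 2 - 1 := by
  obtain ⟨V, rfl⟩ : ∃ V, expand R 2 V = p := ⟨_, expand_contract_two_of_comp_neg_X hp⟩
  refine ⟨(taylor (a ^ 2) V).divX, ?_, ?_⟩
  · rw [expand_aeval, expand_eval, ← aeval_add_algebraMap, sub_add_cancel]
  · rw [natDegree_divX_eq_natDegree_tsub_one, natDegree_taylor, natDegree_expand,
      Nat.mul_div_cancel _ two_pos]

end Polynomial

namespace LaurentPolynomial

variable {R : Type*} [CommRing R]

theorem T_mul_T_neg (a : ℤ) : (T a * T (-a) : R[T;T⁻¹]) = 1 := by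
  rw [← T_add, add_neg_cancel, T_zero]

theorem T_one_add_T_neg_one_sq_sub_four :
    (T 1 + T (-1) : R[T;T⁻¹]) ^ 2 - 4 = T 2 + T (-2) - 2 := by
  rw [show (-2 : ℤ) = -1 + -1 from rfl, show (2 : ℤ) = 1 + 1 from rfl, T_add, T_add]
  linear_combination 2 * T_mul_T_neg (R := R) 1

theorem chebyshev_C_eval_T_one_add_T_neg_one (n : ℕ) :
    (Chebyshev.C R[T;T⁻¹] n).eval (T 1 + T (-1)) = T n + T (-n) := by
  rw [Chebyshev.C_eval_add_of_mul_eq_one (T_mul_T_neg 1), T_pow, T_pow, mul_one, mul_neg_one]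

theorem T_sub_T_neg_eq_mul_chebyshev_S_eval (m : ℕ) (a : ℤ) :
    (T ((m + 1) * a) - T (-((m + 1) * a)) : R[T;T⁻¹])
      = (T a - T (-a)) * (Chebyshev.S R[T;T⁻¹] m).eval (T a + T (-a)) := by
  rw [mul_comm (T a - T (-a)), Chebyshev.S_eval_add_mul_sub_of_mul_eq_one (T_mul_T_neg a), T_pow,
    T_pow]
  push_cast
  ring_nf

end LaurentPolynomial

/-- `[(m + 1) n] / [n]` as a polynomial in `T 1 + T (-1)`. -/
noncomputable def qIntRatio (m n : ℕ) : ℤ[X] := (Chebyshev.S ℤ m).comp (Chebyshev.C ℤ n)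

theorem T_sub_T_neg_eq_mul_aeval_qIntRatio (m n : ℕ) :
    (T (((m + 1) * n : ℕ) : ℤ) - T (-(((m + 1) * n : ℕ) : ℤ)) : ℤ[T;T⁻¹])
      = (T n - T (-n)) * aeval (T 1 + T (-1)) (qIntRatio m n) := by
  rw [qIntRatio, aeval_comp, Chebyshev.aeval_C, chebyshev_C_eval_T_one_add_T_neg_one,
    Chebyshev.aeval_S, ← T_sub_T_neg_eq_mul_chebyshev_S_eval]
  push_cast
  rfl

theorem qIntRatio_eval_two (m n : ℕ) : (qIntRatio m n).eval 2 = m + 1 := by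
  rw [qIntRatio, eval_comp, Chebyshev.C_eval_two, Chebyshev.S_eval_two, Int.cast_id]

theorem natDegree_qIntRatio (m n : ℕ) : (qIntRatio m n).natDegree = m * n := by
  rw [qIntRatio, natDegree_comp, Chebyshev.natDegree_S_natCast, Chebyshev.natDegree_C_natCast]

theorem qIntRatio_comp_neg_X (m n : ℕ) :
    (qIntRatio m n).comp (-X) = (-1) ^ (m * n) * qIntRatio m n := by
  rw [qIntRatio, comp_assoc, Chebyshev.C_comp_neg_X]
  rcases Nat.even_or_odd n with hn | hn
  · rw [hn.neg_one_pow, one_mul, (hn.mul_left m).neg_one_pow, one_mul]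
  · rw [hn.neg_one_pow, neg_one_mul, ← X_comp (p := Chebyshev.C ℤ n), ← neg_comp, ← comp_assoc,
      Chebyshev.S_comp_neg_X, mul_comp, mul_comm m n, pow_mul, hn.neg_one_pow]
    simp

theorem prod_T_sub_T_neg_eq_mul_aeval_prod_qIntRatio (m : ℕ) (L : List ℕ) :
    (L.map fun n => (T (((m + 1) * n : ℕ) : ℤ) - T (-(((m + 1) * n : ℕ) : ℤ)) :
        ℤ[T;T⁻¹])).prod
      = (L.map fun n : ℕ => (T (n : ℤ) - T (-(n : ℤ)) : ℤ[T;T⁻¹])).prod *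
          aeval (T 1 + T (-1)) (L.map (qIntRatio m)).prod := by
  rw [map_list_prod, List.map_map, ← List.prod_map_mul]
  exact congrArg List.prod (List.map_congr_left fun n _ => T_sub_T_neg_eq_mul_aeval_qIntRatio m n)

theorem eval_two_prod_qIntRatio (m : ℕ) (L : List ℕ) :
    (L.map (qIntRatio m)).prod.eval 2 = (m + 1) ^ L.length := by
  simp [eval_list_prod, Function.comp_def, qIntRatio_eval_two]

theorem natDegree_prod_qIntRatio (m : ℕ) (L : List ℕ) :
    (L.map (qIntRatio m)).prod.natDegree = m * L.sum := by
  induction L with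
  | nil => simp
  | cons n L ih =>
    have hn : qIntRatio m n ≠ 0 := fun h => by
      have := qIntRatio_eval_two m n
      rw [h, eval_zero] at this
      omega
    have hL : (L.map (qIntRatio m)).prod ≠ 0 := fun h => by
      have := eval_two_prod_qIntRatio m L
      rw [h, eval_zero] at this
      exact (pow_pos (by omega) _).ne this
    rw [List.map_cons, List.prod_cons, natDegree_mul hn hL, natDegree_qIntRatio, ih, List.sum_cons,
      mul_add]

theorem prod_qIntRatio_comp_neg_X (m : ℕ) (L : List ℕ) :
    (L.map (qIntRatio m)).prod.comp (-X) = (-1) ^ (m * L.sum) * (L.map (qIntRatio m)).prod := by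
  rw [list_prod_comp_neg_X L _ _ (qIntRatio_comp_neg_X m), List.sum_map_mul_left, List.map_id']

open LaurentPolynomial in
theorem lemma_G3_2_general (L : List ℕ) (k : ℕ) (hk : 0 < k)
    (hpar : Odd k ∨ Even L.sum) :
    ∃ u : Polynomial ℤ,
      (L.map (fun n => (T ((k * n : ℕ) : ℤ) - T (-((k * n : ℕ) : ℤ)) :
            LaurentPolynomial ℤ))).prod
        = (L.map (fun n => (T (n : ℤ) - T (-(n : ℤ)) : LaurentPolynomial ℤ))).prod *
            ((k : LaurentPolynomial ℤ) ^ L.length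
              + (T 2 + T (-2) - 2) *
                  Polynomial.aeval (T 2 + T (-2) - 2 : LaurentPolynomial ℤ) u) ∧
      u.natDegree = (k - 1) * L.sum / 2 - 1 := by
  obtain ⟨m, rfl⟩ := Nat.exists_eq_add_one.mpr hk
  have h_even : (L.map (qIntRatio m)).prod.comp (-X) = (L.map (qIntRatio m)).prod := by
    rw [prod_qIntRatio_comp_neg_X, Even.neg_one_pow, one_mul]
    rcases hpar with hk | hL
    · exact (Nat.not_odd_iff_even.mp (Nat.odd_add_one.mp hk)).mul_right _
    · exact hL.mul_left m
  obtain ⟨u, hu, hdeg⟩ :=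
    exists_aeval_eq_eval_add_mul_of_comp_neg_X h_even 2 (T 1 + T (-1) : ℤ[T;T⁻¹])
  -- the ascription `(n : ℤ)` in the statement makes Lean coerce the list `L` itself to `List ℤ`
  have h_coe : L.map (fun n => (T (n : ℤ) - T (-(n : ℤ)) : ℤ[T;T⁻¹]))
      = L.map fun n : ℕ => (T (n : ℤ) - T (-(n : ℤ)) : ℤ[T;T⁻¹]) := by
    simp only [bind_pure_comp, List.map_eq_map, List.map_map]
    rfl
  refine ⟨u, ?_, ?_⟩
  · rw [prod_T_sub_T_neg_eq_mul_aeval_prod_qIntRatio, h_coe, hu, eval_two_prod_qIntRatio]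
    simp [T_one_add_T_neg_one_sq_sub_four]
  · rw [hdeg, natDegree_prod_qIntRatio, Nat.add_sub_cancel]

open LaurentPolynomial in
/-- For a partition λ (list of positive parts) and k ≥ 1 with k odd or |λ| even,
[kλ]/[λ] = k^{l(λ)} + t·u(t) for some u ∈ ℤ[t] of degree (k−1)|λ|/2 − 1
(natural subtraction; t = q + q^{−1} − 2, T = q^{1/2}, [n] = T n − T(−n)). -/
theorem lemma_G3_2 (L : List ℕ) (k : ℕ) (hk : 0 < k) (hL : ∀ x ∈ L, 0 < x)
    (hpar : Odd k ∨ Even L.sum) :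
    ∃ u : Polynomial ℤ,
      (L.map (fun n => (T ((k * n : ℕ) : ℤ) - T (-((k * n : ℕ) : ℤ)) :
            LaurentPolynomial ℤ))).prod
        = (L.map (fun n => (T (n : ℤ) - T (-(n : ℤ)) : LaurentPolynomial ℤ))).prod *
            ((k : LaurentPolynomial ℤ) ^ L.length
              + (T 2 + T (-2) - 2) *
                  Polynomial.aeval (T 2 + T (-2) - 2 : LaurentPolynomial ℤ) u) ∧
      u.natDegree = (k - 1) * L.sum / 2 - 1 :=
  lemma_G3_2_general L k hk hpar
end

section
/- Let m_1, …, m_l be positive odd integers. Then the rational function ((−1)^{l+1} + Π_{i=1}^{l} (1 + t_{m_i}/2)) / (t + 4) lies in ℚ[t], where t_m = q^m + q^{−m} − 2 as a polynomial in t = q + q^{−1} − 2. -/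
/-!
Writing `q + q⁻¹ = t + 2`, the Dickson polynomial `D_m = dickson 1 1 m` gives
`t_m = D_m(t + 2) - 2`. The point `t = -4` corresponds to `q = -1`, where `t_m = 2(-1)^m - 2 = -4`
for odd `m`; there every factor `1 + t_{m_i}/2` equals `-1`, so the numerator vanishes and the
factor theorem divides it by `t + 4`.
-/

section

open Polynomial

theorem aeval_dickson_one_one_add_inv {R A : Type*} [CommRing R] [CommRing A] [Algebra R A]
    {x y : A} (h : x * y = 1) (n : ℕ) :
    aeval (x + y) (dickson 1 (1 : R) n) = x ^ n + y ^ n := by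
  rw [aeval_def, eval₂_eq_eval_map, map_dickson, map_one, dickson_one_one_eval_add_inv x y h]

theorem dickson_one_one_eval_neg_two {R : Type*} [CommRing R] (n : ℕ) :
    (dickson 1 (1 : R) n).eval (-2) = 2 * (-1) ^ n := by
  have := dickson_one_one_eval_add_inv (-1 : R) (-1) (by norm_num) n
  rwa [← two_mul, mul_neg_one, ← two_mul] at this

theorem aeval_eq_mul_aeval_divByMonic_of_isRoot {R A : Type*} [CommRing R] [CommRing A]
    [Algebra R A] {p : R[X]} {a : R} (h : p.IsRoot a) (x : A) :
    aeval x p = (x - algebraMap R A a) * aeval x (p /ₘ (X - C a)) := by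
  conv_lhs => rw [← mul_divByMonic_eq_iff_isRoot.mpr h]
  rw [map_mul, map_sub, aeval_X, aeval_C]

/-- `t_m = [m]^2` as a polynomial in `t`. -/
noncomputable def qSquareBracket (R : Type*) [CommRing R] (m : ℕ) : R[X] :=
  (dickson 1 (1 : R) m).comp (X + 2) - 2

open LaurentPolynomial in
theorem aeval_qSquareBracket {R : Type*} [CommRing R] (m : ℕ) :
    aeval (T 2 + T (-2) - 2 : R[T;T⁻¹]) (qSquareBracket R m) = T (2 * m) + T (-(2 * m)) - 2 := by
  have hinv : (T 2 * T (-2) : R[T;T⁻¹]) = 1 := by rw [← T_add]; simp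
  rw [qSquareBracket, map_sub, aeval_comp, map_add, aeval_X, map_ofNat, sub_add_cancel,
    aeval_dickson_one_one_add_inv hinv, T_pow, T_pow]
  ring_nf

theorem qSquareBracket_eval_neg_four_of_odd {R : Type*} [CommRing R] {m : ℕ} (hm : Odd m) :
    (qSquareBracket R m).eval (-4) = -4 := by
  rw [qSquareBracket, eval_sub, eval_comp, eval_add, eval_X, eval_ofNat,
    show (-4 : R) + 2 = -2 by norm_num, dickson_one_one_eval_neg_two, hm.neg_one_pow]
  norm_num

noncomputable def numeratorPoly {l : ℕ} (m : Fin l → ℕ) : ℚ[X] :=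
  (-1) ^ (l + 1) + ∏ i, (1 + C (1 / 2 : ℚ) * qSquareBracket ℚ (m i))

open LaurentPolynomial in
theorem aeval_numeratorPoly {l : ℕ} (m : Fin l → ℕ) :
    aeval (T 2 + T (-2) - 2 : ℚ[T;T⁻¹]) (numeratorPoly m) =
      (-1) ^ (l + 1) +
        ∏ i, (1 + LaurentPolynomial.C (1 / 2 : ℚ) *
          (T (2 * (m i : ℤ)) + T (-(2 * (m i : ℤ))) - 2)) := by
  simp only [numeratorPoly, map_add, map_pow, map_neg, map_one, map_prod, map_mul,
    Polynomial.aeval_C, ← LaurentPolynomial.C_eq_algebraMap, aeval_qSquareBracket]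

theorem numeratorPoly_isRoot_neg_four {l : ℕ} {m : Fin l → ℕ} (hodd : ∀ i, Odd (m i)) :
    (numeratorPoly m).IsRoot (-4) := by
  have hfactor (i : Fin l) : eval (-4) (1 + C (1 / 2 : ℚ) * qSquareBracket ℚ (m i)) = -1 := by
    rw [eval_add, eval_mul, eval_C, eval_one, qSquareBracket_eval_neg_four_of_odd (hodd i)]
    norm_num
  rw [numeratorPoly, IsRoot, eval_add, eval_prod, Finset.prod_congr rfl fun i _ => hfactor i]
  simp [pow_succ]

end

open LaurentPolynomial in
/-- `T` plays the role of `q^{1/2}`, so `t_m = T(2m) + T(−2m) − 2` and `t = T 2 + T(−2) − 2`. -/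
theorem divisibility_by_t_add_four_general (l : ℕ) (m : Fin l → ℕ)
    (hodd : ∀ i, Odd (m i)) :
    ∃ P : Polynomial ℚ,
      ((-1 : LaurentPolynomial ℚ) ^ (l + 1)
          + ∏ i, (1 + C (1 / 2 : ℚ) * (T (2 * (m i : ℤ)) + T (-(2 * (m i : ℤ))) - 2)))
        = ((T 2 + T (-2) - 2) + 4) *
            Polynomial.aeval (T 2 + T (-2) - 2 : LaurentPolynomial ℚ) P := by
  refine ⟨numeratorPoly m /ₘ (Polynomial.X - Polynomial.C (-4)), ?_⟩
  rw [← aeval_numeratorPoly,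
    aeval_eq_mul_aeval_divByMonic_of_isRoot (numeratorPoly_isRoot_neg_four hodd), map_neg,
    map_ofNat, sub_neg_eq_add]

open LaurentPolynomial in
/-- For positive odd integers m_1,…,m_l, the quantity
((−1)^{l+1} + Π_i (1 + t_{m_i}/2)) / (t + 4) lies in ℚ[t], where
t_m = q^m + q^{−m} − 2 and t = q + q^{−1} − 2.  Here T is q^{1/2},
so t_m = T(2m) + T(−2m) − 2 and t = T 2 + T(−2) − 2. -/
theorem divisibility_by_t_add_four (l : ℕ) (m : Fin l → ℕ)
    (hodd : ∀ i, Odd (m i)) (hpos : ∀ i, 0 < m i) :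
    ∃ P : Polynomial ℚ,
      ((-1 : LaurentPolynomial ℚ) ^ (l + 1)
          + ∏ i, (1 + C (1 / 2 : ℚ) * (T (2 * (m i : ℤ)) + T (-(2 * (m i : ℤ))) - 2)))
        = ((T 2 + T (-2) - 2) + 4) *
            Polynomial.aeval (T 2 + T (-2) - 2 : LaurentPolynomial ℚ) P :=
  divisibility_by_t_add_four_general l m hodd
end
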